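/- arXiv:2301.04383 — 2 statements merged into one kernel-verified Lean document; each statement's English description precedes it below -/
import Mathlib

section
/- Let w = (p,q) be exterior K-quasiconformal in ℝ²∖B̄₁(0) with K ≥ 1, and define the Kelvin transforms p̃(x) = p(x/|x|²) and q̃(x) = q(x/|x|²) for x ∈ B₁(0)∖{0}. Then the mapping w̃ = (q̃, p̃) is K-quasiconformal in B₁(0)∖{0}. -/
/-!
The inversion `x ↦ x/|x|²` is conformal and orientation-reversing: its differential at `x` is
`|x|⁻²` times the reflection in the line orthogonal to `x`. Precomposing `(p, q)` with it thus
multiplies `p₁² + p₂² + q₁² + q₂²` by `|x|⁻⁴` and the Jacobian `p₁q₂ − p₂q₁` by `−|x|⁻⁴`;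
exchanging the two components restores the sign of the Jacobian.
-/

open Filter Topology Metric Real

noncomputable section

/-- The plane `ℝ²` with the Euclidean norm. -/
abbrev E2 : Type := EuclideanSpace ℝ (Fin 2)

/-- The `i`-th partial derivative of `f : ℝ² → ℝ` at `x`. -/
def pd (f : E2 → ℝ) (i : Fin 2) (x : E2) : ℝ :=
  fderiv ℝ f x (EuclideanSpace.single i 1)

/-- The inversion `x ↦ x/|x|²` of the plane. -/
def inv2 (x : E2) : E2 := (‖x‖ ^ 2)⁻¹ • x

lemma norm_inv2 (x : E2) : ‖inv2 x‖ = ‖x‖⁻¹ := by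
  rcases eq_or_ne x 0 with rfl | hx
  · simp [inv2]
  · rw [inv2, norm_smul, norm_inv, norm_pow, norm_norm]
    field_simp

lemma inv2_inv2 (x : E2) : inv2 (inv2 x) = x := by
  rcases eq_or_ne x 0 with rfl | hx
  · simp [inv2]
  · have hx2 : ‖x‖ ^ 2 ≠ 0 := by positivity
    rw [inv2, norm_inv2, inv2, smul_smul, inv_pow, inv_inv, mul_inv_cancel₀ hx2, one_smul]

lemma inv2_ne_zero {x : E2} (hx : x ≠ 0) : inv2 x ≠ 0 := by
  simpa [inv2] using hx

lemma hasFDerivAt_inv2 {x : E2} (hx : x ≠ 0) :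
    HasFDerivAt inv2
      ((‖x‖ ^ 2)⁻¹ • ContinuousLinearMap.id ℝ E2 +
        ((-((‖x‖ ^ 2) ^ 2)⁻¹) • (2 • innerSL ℝ x)).smulRight x) x := by
  have hx2 : ‖x‖ ^ 2 ≠ 0 := by positivity
  exact ((hasDerivAt_inv hx2).comp_hasFDerivAt x (hasStrictFDerivAt_norm_sq x).hasFDerivAt).smul
    (hasFDerivAt_id x)

lemma differentiableAt_comp_inv2_iff {f : E2 → ℝ} {x : E2} (hx : x ≠ 0) :
    DifferentiableAt ℝ (fun y => f (inv2 y)) x ↔ DifferentiableAt ℝ f (inv2 x) := by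
  refine ⟨fun h => ?_, fun h => h.comp x (hasFDerivAt_inv2 hx).differentiableAt⟩
  have h' : DifferentiableAt ℝ (fun y => f (inv2 y)) (inv2 (inv2 x)) := by rwa [inv2_inv2]
  simpa only [Function.comp_def, inv2_inv2] using
    h'.comp (inv2 x) (hasFDerivAt_inv2 (inv2_ne_zero hx)).differentiableAt

lemma fderiv_apply_eq_pd (f : E2 → ℝ) (y x : E2) :
    fderiv ℝ f y x = x 0 * pd f 0 y + x 1 * pd f 1 y := by
  conv_lhs => rw [← (EuclideanSpace.basisFun (Fin 2) ℝ).sum_repr x]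
  simp [Fin.sum_univ_two, pd]

lemma pd_comp_inv2 (f : E2 → ℝ) {x : E2} (hx : x ≠ 0) (i : Fin 2) :
    pd (fun y => f (inv2 y)) i x =
      (‖x‖ ^ 2)⁻¹ * pd f i (inv2 x) -
        2 * ((‖x‖ ^ 2)⁻¹) ^ 2 * x i * (x 0 * pd f 0 (inv2 x) + x 1 * pd f 1 (inv2 x)) := by
  by_cases hf : DifferentiableAt ℝ f (inv2 x)
  · rw [pd, ← Function.comp_def f inv2, (hf.hasFDerivAt.comp x (hasFDerivAt_inv2 hx)).fderiv,
      ← fderiv_apply_eq_pd]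
    simp only [ContinuousLinearMap.comp_apply, add_apply, smul_apply,
      ContinuousLinearMap.smulRight_apply, innerSL_apply_apply,
      EuclideanSpace.inner_single_right, ContinuousLinearMap.id_apply, map_add, map_smul, pd,
      smul_eq_mul, nsmul_eq_mul, conj_trivial]
    ring
  -- `inv2` is an involution, so `f ∘ inv2` is not differentiable at `x` either.
  · have hfx := mt (differentiableAt_comp_inv2_iff hx).mp hf
    simp [pd, fderiv_zero_of_not_differentiableAt hf, fderiv_zero_of_not_differentiableAt hfx]

/-- `(a, b)` and `(c, d)` are the gradients of `p` and `q` at `x/|x|²`, `(u, v) = x` and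
`t = |x|⁻²`. -/
lemma quasiconformal_ineq_kelvin {K t u v a b c d : ℝ} (ht : t * (u ^ 2 + v ^ 2) = 1)
    (h : a ^ 2 + b ^ 2 + c ^ 2 + d ^ 2 ≤ 2 * K * (a * d - b * c)) :
    (t * c - 2 * t ^ 2 * u * (u * c + v * d)) ^ 2 + (t * d - 2 * t ^ 2 * v * (u * c + v * d)) ^ 2 +
        (t * a - 2 * t ^ 2 * u * (u * a + v * b)) ^ 2 +
        (t * b - 2 * t ^ 2 * v * (u * a + v * b)) ^ 2 ≤
      2 * K * ((t * c - 2 * t ^ 2 * u * (u * c + v * d)) *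
          (t * b - 2 * t ^ 2 * v * (u * a + v * b)) -
        (t * d - 2 * t ^ 2 * v * (u * c + v * d)) * (t * a - 2 * t ^ 2 * u * (u * a + v * b))) :=
  calc _ = t ^ 2 * (a ^ 2 + b ^ 2 + c ^ 2 + d ^ 2) := by
        linear_combination 4 * t ^ 3 * ((u * a + v * b) ^ 2 + (u * c + v * d) ^ 2) * ht
    _ ≤ t ^ 2 * (2 * K * (a * d - b * c)) := by gcongr
    _ = _ := by linear_combination 4 * K * t ^ 2 * (b * c - a * d) * ht

theorem stmt2_general (K : ℝ) (p q : E2 → ℝ)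
    (hqc : ∀ x : E2, 1 < ‖x‖ →
      pd p 0 x ^ 2 + pd p 1 x ^ 2 + pd q 0 x ^ 2 + pd q 1 x ^ 2 ≤
        2 * K * (pd p 0 x * pd q 1 x - pd p 1 x * pd q 0 x)) :
    ∀ x ∈ Metric.ball (0 : E2) 1 \ {0},
      pd (fun y => q (inv2 y)) 0 x ^ 2 + pd (fun y => q (inv2 y)) 1 x ^ 2 +
          pd (fun y => p (inv2 y)) 0 x ^ 2 + pd (fun y => p (inv2 y)) 1 x ^ 2 ≤
        2 * K * (pd (fun y => q (inv2 y)) 0 x * pd (fun y => p (inv2 y)) 1 x -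
          pd (fun y => q (inv2 y)) 1 x * pd (fun y => p (inv2 y)) 0 x) := by
  rintro x ⟨hx1, hx0 : x ≠ 0⟩
  have hy : 1 < ‖inv2 x‖ := by
    rw [norm_inv2]
    exact (one_lt_inv₀ (norm_pos_iff.mpr hx0)).mpr (mem_ball_zero_iff.mp hx1)
  have ht : (‖x‖ ^ 2)⁻¹ * (x 0 ^ 2 + x 1 ^ 2) = 1 := by
    have hx2 : ‖x‖ ^ 2 ≠ 0 := by positivity
    rw [← inv_mul_cancel₀ hx2, EuclideanSpace.norm_sq_eq, Fin.sum_univ_two]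
    simp only [Real.norm_eq_abs, sq_abs]
  simp only [pd_comp_inv2 _ hx0]
  exact quasiconformal_ineq_kelvin ht (hqc _ hy)

/-- If `w = (p,q)` is exterior `K`-quasiconformal in `ℝ² ∖ B̄₁(0)` and
`p̃, q̃` are the Kelvin transforms of `p, q`, then `w̃ = (q̃, p̃)` is
`K`-quasiconformal in `B₁(0) ∖ {0}`. -/
theorem stmt2 (K : ℝ) (hK : 1 ≤ K) (p q : E2 → ℝ)
    (hp : ContDiffOn ℝ 1 p {x : E2 | 1 < ‖x‖}) (hq : ContDiffOn ℝ 1 q {x : E2 | 1 < ‖x‖})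
    (hqc : ∀ x : E2, 1 < ‖x‖ →
      pd p 0 x ^ 2 + pd p 1 x ^ 2 + pd q 0 x ^ 2 + pd q 1 x ^ 2 ≤
        2 * K * (pd p 0 x * pd q 1 x - pd p 1 x * pd q 0 x)) :
    ∀ x ∈ Metric.ball (0 : E2) 1 \ {0},
      pd (fun y => q (inv2 y)) 0 x ^ 2 + pd (fun y => q (inv2 y)) 1 x ^ 2 +
          pd (fun y => p (inv2 y)) 0 x ^ 2 + pd (fun y => p (inv2 y)) 1 x ^ 2 ≤
        2 * K * (pd (fun y => q (inv2 y)) 0 x * pd (fun y => p (inv2 y)) 1 x -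
          pd (fun y => q (inv2 y)) 1 x * pd (fun y => p (inv2 y)) 0 x) :=
  stmt2_general K p q hqc
end
end

section
/- Let Ω be a bounded domain of ℝ² and let u ∈ C²(ℝ²∖Ω̄) satisfy a₁₁(x)u₁₁(x) + 2a₁₂(x)u₁₂(x) + a₂₂(x)u₂₂(x) = 0 in ℝ²∖Ω̄, where (ξ₁² + ξ₂²) ≤ a₁₁ξ₁² + 2a₁₂ξ₁ξ₂ + a₂₂ξ₂² ≤ γ(ξ₁² + ξ₂²) for all ξ ∈ ℝ² and some constant γ ≥ 1. Then the mapping w = (u₂, u₁) is exterior K-quasiconformal in ℝ²∖Ω̄ with K = (1 + γ)/2; that is, with p = u₁, q = u₂ one has p₁² + p₂² + q₁² + q₂² ≤ (1 + γ)(p₂q₁ − p₁q₂) at every x ∈ ℝ²∖Ω̄. -/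
open Filter Topology Metric Real

noncomputable section

/-- The second partial derivative `∂ᵢ∂ⱼ f` at `x`. -/
def pd2 (f : E2 → ℝ) (i j : Fin 2) (x : E2) : ℝ :=
  pd (fun y => pd f j y) i x

/-- Scalar eigenvalue lemma: if `μ1 N1 + μ2 N2 = 0` with the weights `N1, N2`
comparable to `n > 0` within factor `γ`, then `μ1² + μ2² ≤ (1+γ)(−μ1 μ2)`. -/
lemma scalar_lem (γ μ1 μ2 N1 N2 n : ℝ) (hγ : 1 ≤ γ) (hn : 0 < n)
    (h1 : n ≤ N1) (h2 : N1 ≤ γ * n) (h3 : n ≤ N2) (h4 : N2 ≤ γ * n)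
    (h : μ1 * N1 + μ2 * N2 = 0) :
    μ1 ^ 2 + μ2 ^ 2 ≤ -((1 + γ) * (μ1 * μ2)) := by
  have hN1 : 0 < N1 := lt_of_lt_of_le hn h1
  have hN2 : 0 < N2 := lt_of_lt_of_le hn h3
  have h' : μ1 * μ2 * (N1 * N2) = -(μ1 * N1) ^ 2 := by linear_combination (μ1 * N1) * h
  have hprod : μ1 * μ2 ≤ 0 := by nlinarith [h', mul_pos hN1 hN2, sq_nonneg (μ1 * N1)]
  rcases le_total 0 μ1 with hs | hs
  · have hμ2 : μ2 ≤ 0 := by nlinarith [mul_nonneg hs hN1.le]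
    have e1 : μ1 * n ≤ μ1 * N1 := by nlinarith
    have e2 : μ1 * N1 ≤ γ * (-μ2) * n := by nlinarith
    have e3 : (-μ2) * n ≤ (-μ2) * N2 := by nlinarith
    have e4 : (-μ2) * N2 ≤ γ * μ1 * n := by nlinarith
    have k1 : μ1 ≤ γ * (-μ2) := by nlinarith
    have k2 : (-μ2) ≤ γ * μ1 := by nlinarith
    nlinarith [mul_nonneg (sub_nonneg.2 k1) (sub_nonneg.2 k2),
      mul_nonneg (mul_nonneg (sub_nonneg.2 hγ) hs) (neg_nonneg.2 hμ2)]
  · have hμ2 : 0 ≤ μ2 := by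
      nlinarith [mul_nonneg (mul_nonneg (neg_nonneg.2 hs) (neg_nonneg.2 hs)) hN1.le,
        sq_nonneg μ2]
    have k1 : -μ1 ≤ γ * μ2 := by nlinarith
    have k2 : μ2 ≤ γ * (-μ1) := by nlinarith
    nlinarith [mul_nonneg (sub_nonneg.2 k1) (sub_nonneg.2 k2),
      mul_nonneg (mul_nonneg (sub_nonneg.2 hγ) (neg_nonneg.2 hs)) hμ2]

/-- The algebraic core: a symmetric matrix `[[A,B],[B,C]]` annihilated (in trace
pairing) by a matrix with ellipticity constants `1, γ` satisfies the
quasiconformality inequality. -/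
lemma core_lem (γ a b c A B C : ℝ) (hγ : 1 ≤ γ)
    (hl : ∀ ξ1 ξ2 : ℝ, ξ1 ^ 2 + ξ2 ^ 2 ≤ a * ξ1 ^ 2 + 2 * b * ξ1 * ξ2 + c * ξ2 ^ 2)
    (hup : ∀ ξ1 ξ2 : ℝ, a * ξ1 ^ 2 + 2 * b * ξ1 * ξ2 + c * ξ2 ^ 2 ≤ γ * (ξ1 ^ 2 + ξ2 ^ 2))
    (heq : a * A + 2 * b * B + c * C = 0) :
    A ^ 2 + 2 * B ^ 2 + C ^ 2 ≤ (1 + γ) * (B ^ 2 - A * C) := by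
  by_cases hB : B = 0
  · subst hB
    have h1 := hl 1 0; have h2 := hup 1 0; have h3 := hl 0 1; have h4 := hup 0 1
    have := scalar_lem γ A C a c 1 hγ one_pos (by nlinarith) (by nlinarith)
      (by nlinarith) (by nlinarith) (by nlinarith)
    nlinarith
  · have hD : (0:ℝ) < (A - C) ^ 2 + 4 * B ^ 2 := by positivity
    obtain ⟨s, hs⟩ : ∃ s : ℝ, s ^ 2 = (A - C) ^ 2 + 4 * B ^ 2 :=
      ⟨Real.sqrt _, Real.sq_sqrt hD.le⟩
    obtain ⟨μ1, hμ1def⟩ : ∃ μ1 : ℝ, μ1 = (A + C + s) / 2 := ⟨_, rfl⟩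
    obtain ⟨μ2, hμ2def⟩ : ∃ μ2 : ℝ, μ2 = (A + C - s) / 2 := ⟨_, rfl⟩
    have hchar : μ1 ^ 2 - (A + C) * μ1 + (A * C - B ^ 2) = 0 := by
      rw [hμ1def]; linear_combination hs / 4
    have hsum : μ1 + μ2 = A + C := by rw [hμ1def, hμ2def]; ring
    have hn : (0:ℝ) < B ^ 2 + (μ1 - A) ^ 2 := by positivity
    have hkey : μ1 * (a * B ^ 2 + 2 * b * B * (μ1 - A) + c * (μ1 - A) ^ 2)
        + μ2 * (a * (μ1 - A) ^ 2 + 2 * b * (μ1 - A) * (-B) + c * (-B) ^ 2) = 0 := by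
      linear_combination (B ^ 2 + (μ1 - A) ^ 2) * heq
        + ((c - a) * (μ1 - A) + 2 * b * B) * hchar
        + (a * (μ1 - A) ^ 2 + 2 * b * (μ1 - A) * (-B) + c * (-B) ^ 2) * hsum
    have hb1 := hl B (μ1 - A)
    have hb2 := hup B (μ1 - A)
    have hb3 := hl (μ1 - A) (-B)
    have hb4 := hup (μ1 - A) (-B)
    have hfin := scalar_lem γ μ1 μ2
      (a * B ^ 2 + 2 * b * B * (μ1 - A) + c * (μ1 - A) ^ 2)
      (a * (μ1 - A) ^ 2 + 2 * b * (μ1 - A) * (-B) + c * (-B) ^ 2)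
      (B ^ 2 + (μ1 - A) ^ 2) hγ hn (by nlinarith) (by nlinarith) (by nlinarith)
      (by nlinarith) hkey
    have hmul : μ1 * μ2 = A * C - B ^ 2 := by
      rw [hμ1def, hμ2def]; linear_combination (-1/4) * hs
    have hsq : μ1 ^ 2 + μ2 ^ 2 = A ^ 2 + 2 * B ^ 2 + C ^ 2 := by
      rw [hμ1def, hμ2def]; linear_combination hs / 2
    nlinarith [hfin]

/-- If `u ∈ C²(ℝ² ∖ Ω̄)` solves a linear uniformly elliptic equation with
ellipticity constants `λ = 1`, `Λ ≤ γ`, then `w = (u₂, u₁)` is exterior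
`K`-quasiconformal in `ℝ² ∖ Ω̄` with `K = (1 + γ)/2`: with `p = u₁`, `q = u₂`,
`p₁² + p₂² + q₁² + q₂² ≤ (1 + γ)(p₂q₁ - p₁q₂)` at every point of `ℝ² ∖ Ω̄`. -/
theorem stmt6 (Ω : Set E2) (hΩo : IsOpen Ω) (hΩconn : IsConnected Ω)
    (hΩb : Bornology.IsBounded Ω) (a11 a12 a22 : E2 → ℝ) (γ : ℝ) (hγ : 1 ≤ γ)
    (u : E2 → ℝ) (hu : ContDiffOn ℝ 2 u (closure Ω)ᶜ)
    (hell : ∀ x ∈ (closure Ω)ᶜ, ∀ ξ1 ξ2 : ℝ,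
      (ξ1 ^ 2 + ξ2 ^ 2) ≤
          a11 x * ξ1 ^ 2 + 2 * a12 x * ξ1 * ξ2 + a22 x * ξ2 ^ 2 ∧
        a11 x * ξ1 ^ 2 + 2 * a12 x * ξ1 * ξ2 + a22 x * ξ2 ^ 2 ≤
          γ * (ξ1 ^ 2 + ξ2 ^ 2))
    (heq : ∀ x ∈ (closure Ω)ᶜ,
      a11 x * pd2 u 0 0 x + 2 * a12 x * pd2 u 0 1 x + a22 x * pd2 u 1 1 x = 0) :
    ∀ x ∈ (closure Ω)ᶜ,
      pd (pd u 0) 0 x ^ 2 + pd (pd u 0) 1 x ^ 2 +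
          pd (pd u 1) 0 x ^ 2 + pd (pd u 1) 1 x ^ 2 ≤
        (1 + γ) * (pd (pd u 0) 1 x * pd (pd u 1) 0 x -
          pd (pd u 0) 0 x * pd (pd u 1) 1 x) := by
  intro x hx
  have hopen : IsOpen (closure Ω)ᶜ := isClosed_closure.isOpen_compl
  have hx2 : ContDiffAt ℝ 2 u x := hu.contDiffAt (hopen.mem_nhds hx)
  have hsym := hx2.isSymmSndFDerivAt (by simp)
  have hdiff : DifferentiableAt ℝ (fderiv ℝ u) x :=
    (hx2.fderiv_right (m := 1) (by norm_num)).differentiableAt one_ne_zero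
  have key : ∀ i j : Fin 2, pd (pd u j) i x
      = fderiv ℝ (fderiv ℝ u) x (EuclideanSpace.single i 1) (EuclideanSpace.single j 1) := by
    intro i j
    have : pd (pd u j) i x
        = fderiv ℝ (fun y => (fderiv ℝ u y) (EuclideanSpace.single j 1)) x
            (EuclideanSpace.single i 1) := rfl
    rw [this, fderiv_clm_apply hdiff (differentiableAt_const _)]
    simp
  have hmixed : pd (pd u 0) 1 x = pd (pd u 1) 0 x := by rw [key, key, hsym]
  have heqx := heq x hx
  have hpd2 : ∀ i j : Fin 2, pd2 u i j x = pd (pd u j) i x := fun i j => rfl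
  rw [hpd2, hpd2, hpd2] at heqx
  have hellx := hell x hx
  have hcore := core_lem γ (a11 x) (a12 x) (a22 x)
    (pd (pd u 0) 0 x) (pd (pd u 1) 0 x) (pd (pd u 1) 1 x) hγ
    (fun ξ1 ξ2 => (hellx ξ1 ξ2).1) (fun ξ1 ξ2 => (hellx ξ1 ξ2).2) heqx
  rw [hmixed]
  nlinarith [hcore]
end
end
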